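/- arXiv:2604.16678 — 2 statements merged into one kernel-verified Lean document; each statement's English description precedes it below -/
import Mathlib

section
/- Let C ∈ R^{d1×d2} and ρ > 0. A pair (F1, F2) ∈ R^{r×d1} × R^{r×d2} maximizes tr(F1 C F2ᵀ) − (ρ/2)‖F1ᵀF2‖_F² if and only if F1ᵀF2 is a best rank-r approximation of (1/ρ)C in Frobenius norm, i.e., F1ᵀF2 = (1/ρ)∑_{i=1}^r σ_i u_i v_iᵀ where σ_i, u_i, v_i are top-r singular values/vectors of C. -/
/-! Completing the square, the objective equals `‖C‖² / (2ρ) - (ρ/2) ‖C/ρ - F₁ᵀF₂‖²`, so it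
depends on `(F₁, F₂)` only through `F₁ᵀF₂`, and maximizing it means minimizing the distance from
`C/ρ` to `F₁ᵀF₂`. The products `F₁ᵀF₂` are exactly the matrices of rank at most `r`, since such a
matrix, as a linear map, factors through an `r`-dimensional space. -/

open Matrix

/-- Squared Frobenius norm of a real matrix. -/
noncomputable def frobSq {m n : ℕ} (M : Matrix (Fin m) (Fin n) ℝ) : ℝ :=
  Matrix.trace (Mᵀ * M)

open Module in
theorem LinearMap.exists_comp_eq_of_finrank_range_le {K V W U : Type*} [Field K]
    [AddCommGroup V] [Module K V] [AddCommGroup W] [Module K W] [AddCommGroup U] [Module K U]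
    [FiniteDimensional K U] (f : V →ₗ[K] W) [FiniteDimensional K (range f)]
    (hf : finrank K (range f) ≤ finrank K U) :
    ∃ (g : V →ₗ[K] U) (h : U →ₗ[K] W), h ∘ₗ g = f := by
  obtain ⟨i, hi⟩ := finrank_le_iff_exists_linearMap.mp hf
  obtain ⟨j, hj⟩ := i.exists_leftInverse_of_injective (ker_eq_bot.mpr hi)
  refine ⟨i ∘ₗ f.rangeRestrict, (range f).subtype ∘ₗ j, ?_⟩
  ext x
  simp [← comp_apply j i, hj]

namespace Matrix

variable {K : Type*} [Field K] {r m n : Type*} [Fintype r] [Fintype n]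

theorem rank_transpose_mul_le (A : Matrix r m K) (B : Matrix r n K) :
    (Aᵀ * B).rank ≤ Fintype.card r :=
  (rank_mul_le_left _ _).trans (rank_le_card_width _)

theorem exists_transpose_mul_eq_iff_rank_le [Fintype m] (Z : Matrix m n K) :
    (∃ (A : Matrix r m K) (B : Matrix r n K), Aᵀ * B = Z) ↔ Z.rank ≤ Fintype.card r := by
  classical
  refine ⟨fun ⟨A, B, hAB⟩ => hAB ▸ rank_transpose_mul_le A B, fun hZ => ?_⟩
  obtain ⟨g, h, hhg⟩ := Z.mulVecLin.exists_comp_eq_of_finrank_range_le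
    (U := r → K) (by rwa [Module.finrank_pi])
  refine ⟨(LinearMap.toMatrix' h)ᵀ, LinearMap.toMatrix' g, ?_⟩
  rw [transpose_transpose, ← LinearMap.toMatrix'_comp, hhg, ← toLin'_apply',
    LinearMap.toMatrix'_toLin']

end Matrix

theorem frobSq_smul_sub {m n : ℕ} (a : ℝ) (C M : Matrix (Fin m) (Fin n) ℝ) :
    frobSq (a • C - M) = a ^ 2 * frobSq C - 2 * a * trace (Mᵀ * C) + frobSq M := by
  have hCM : trace (Cᵀ * M) = trace (Mᵀ * C) := by
    rw [← trace_transpose, transpose_mul, transpose_transpose]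
  simp only [frobSq, transpose_sub, transpose_smul, Matrix.sub_mul, Matrix.mul_sub,
    Matrix.smul_mul, Matrix.mul_smul, trace_sub, trace_smul, smul_eq_mul, hCM]
  ring

theorem trace_mul_mul_transpose_sub_frobSq {r m n : ℕ} (C : Matrix (Fin m) (Fin n) ℝ) {ρ : ℝ}
    (hρ : ρ ≠ 0) (G1 : Matrix (Fin r) (Fin m) ℝ) (G2 : Matrix (Fin r) (Fin n) ℝ) :
    trace (G1 * C * G2ᵀ) - (ρ / 2) * frobSq (G1ᵀ * G2)
      = frobSq C / (2 * ρ) - (ρ / 2) * frobSq ((1 / ρ) • C - G1ᵀ * G2) := by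
  rw [frobSq_smul_sub, transpose_mul, transpose_transpose, trace_mul_cycle]
  field_simp
  ring

/-- A pair (F₁, F₂) maximizes tr(F₁ C F₂ᵀ) − (ρ/2)‖F₁ᵀF₂‖_F² if and only if
F₁ᵀF₂ is a best rank-r approximation of (1/ρ)C in the Frobenius norm. -/
theorem stmt1 {r d1 d2 : ℕ} (C : Matrix (Fin d1) (Fin d2) ℝ) (ρ : ℝ) (hρ : 0 < ρ)
    (F1 : Matrix (Fin r) (Fin d1) ℝ) (F2 : Matrix (Fin r) (Fin d2) ℝ) :
    (∀ (G1 : Matrix (Fin r) (Fin d1) ℝ) (G2 : Matrix (Fin r) (Fin d2) ℝ),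
        Matrix.trace (G1 * C * G2ᵀ) - (ρ / 2) * frobSq (G1ᵀ * G2)
          ≤ Matrix.trace (F1 * C * F2ᵀ) - (ρ / 2) * frobSq (F1ᵀ * F2))
      ↔ ((F1ᵀ * F2).rank ≤ r ∧
          ∀ Z : Matrix (Fin d1) (Fin d2) ℝ, Z.rank ≤ r →
            frobSq ((1 / ρ) • C - F1ᵀ * F2) ≤ frobSq ((1 / ρ) • C - Z)) := by
  simp only [trace_mul_mul_transpose_sub_frobSq C hρ.ne', sub_le_sub_iff_left,
    mul_le_mul_iff_right₀ (half_pos hρ)]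
  have hrank (G1 : Matrix (Fin r) (Fin d1) ℝ) (G2 : Matrix (Fin r) (Fin d2) ℝ) :
      (G1ᵀ * G2).rank ≤ r :=
    (rank_transpose_mul_le G1 G2).trans_eq (Fintype.card_fin r)
  refine ⟨fun hmax => ⟨hrank F1 F2, fun Z hZ => ?_⟩, fun ⟨_, hbest⟩ G1 G2 => ?_⟩
  · obtain ⟨A, B, rfl⟩ := (exists_transpose_mul_eq_iff_rank_le (r := Fin r) Z).mpr (by simpa)
    exact hmax A B
  · exact hbest _ (hrank G1 G2)
end

section
/- Let M ∈ R^{m×n} and r ≤ min(m, n). Among all matrices of rank at most r, the Frobenius distance to M is minimized by the truncated SVD M_r = ∑_{i=1}^r σ_i u_i v_iᵀ, and the minimal squared distance equals ∑_{i=r+1}^{min(m,n)} σ_i². -/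
/-!
Orthogonal invariance of the Frobenius norm reduces everything to the rectangular diagonal
matrix `Σ = rectDiag σ`. Given `Z` of rank at most `r`, let `P` be the orthogonal projection onto
the column space of `Z`. Pythagoras gives `‖Σ - Z‖² ≥ ‖Σ - PΣ‖² = ‖Σ‖² - ∑ σₖ² Pₖₖ`, and the
diagonal entries of `P` lie in `[0, 1]` and sum to `rank Z ≤ r`; since `σₖ²` is decreasing, such a
weighted sum is at most `∑_{k<r} σₖ²`, the value attained by the truncation.
-/

open Matrix

open Finset

theorem Fin.sum_ite_lt_eq_sum_range_min {M : Type*} [AddCommMonoid M] (m n : ℕ) (g : ℕ → M) :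
    ∑ i : Fin m, (if (i : ℕ) < n then g i else 0) = ∑ k ∈ range (min m n), g k := by
  rw [Fin.sum_univ_eq_sum_range (fun k => if k < n then g k else 0), ← sum_filter]
  congr 1
  ext k
  simp

theorem sum_range_mul_le_sum_range {N r : ℕ} (hr : r ≤ N) {f p : ℕ → ℝ}
    (hf0 : ∀ k < N, 0 ≤ f k) (hf : ∀ i j, i ≤ j → j < N → f j ≤ f i)
    (hp : ∀ k < N, p k ∈ Set.Icc 0 1) (hps : ∑ k ∈ range N, p k ≤ r) :
    ∑ k ∈ range N, f k * p k ≤ ∑ k ∈ range r, f k := by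
  obtain ⟨c, hc0, hc_head, hc_tail⟩ : ∃ c, 0 ≤ c ∧ (∀ k < r, c ≤ f k) ∧
      ∀ k ∈ Ico r N, f k ≤ c := by
    rcases hr.lt_or_eq with h | rfl
    · exact ⟨f r, hf0 r h, fun k hk => hf k r hk.le h,
        fun k hk => hf r k (mem_Ico.1 hk).1 (mem_Ico.1 hk).2⟩
    · exact ⟨0, le_rfl, hf0, fun k hk => absurd hk (by simp)⟩
  have h_head : ∀ k ∈ range r, f k * p k ≤ f k + c * (p k - 1) := by
    intro k hk
    have hk := mem_range.1 hk
    nlinarith [hc_head k hk, (hp k (hk.trans_le hr)).2]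
  have h_tail : ∀ k ∈ Ico r N, f k * p k ≤ c * p k := fun k hk =>
    mul_le_mul_of_nonneg_right (hc_tail k hk) (hp k (mem_Ico.1 hk).2).1
  calc ∑ k ∈ range N, f k * p k
      = ∑ k ∈ range r, f k * p k + ∑ k ∈ Ico r N, f k * p k :=
        (sum_range_add_sum_Ico _ hr).symm
    _ ≤ ∑ k ∈ range r, (f k + c * (p k - 1)) + ∑ k ∈ Ico r N, c * p k :=
        add_le_add (sum_le_sum h_head) (sum_le_sum h_tail)
    _ = ∑ k ∈ range r, f k + c * (∑ k ∈ range N, p k - r) := by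
        rw [← sum_range_add_sum_Ico p hr, sum_add_distrib, ← mul_sum, ← mul_sum, sum_sub_distrib,
          sum_const, card_range, nsmul_one]
        ring
    _ ≤ ∑ k ∈ range r, f k := by nlinarith

namespace Matrix

def rectDiag {α : Type*} [Zero α] {m n : ℕ} (d : ℕ → α) : Matrix (Fin m) (Fin n) α :=
  of fun i j => if (i : ℕ) = j then d i else 0

section RectDiag

variable {α : Type*} {l m n : ℕ}

theorem transpose_rectDiag [Zero α] (d : ℕ → α) :
    (rectDiag d : Matrix (Fin m) (Fin n) α)ᵀ = rectDiag d := by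
  ext i j
  simp only [rectDiag, transpose_apply, of_apply, eq_comm (a := (j : ℕ))]
  split_ifs with h <;> simp [h]

theorem rectDiag_self [Zero α] (d : ℕ → α) :
    (rectDiag d : Matrix (Fin n) (Fin n) α) = diagonal fun i : Fin n => d i := by
  ext i j
  simp [rectDiag, diagonal_apply, Fin.val_inj]

theorem rectDiag_sub [SubNegZeroMonoid α] (a b : ℕ → α) :
    (rectDiag a - rectDiag b : Matrix (Fin m) (Fin n) α) = rectDiag (a - b) := by
  ext i j
  simp only [rectDiag, sub_apply, of_apply, Pi.sub_apply]
  split_ifs <;> simp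

theorem rectDiag_mul_rectDiag [NonUnitalNonAssocSemiring α] (a b : ℕ → α) :
    (rectDiag a : Matrix (Fin l) (Fin m) α) * (rectDiag b : Matrix (Fin m) (Fin n) α) =
      rectDiag fun k => if k < m then a k * b k else 0 := by
  ext i j
  simp only [rectDiag, mul_apply, of_apply, ite_mul, zero_mul, mul_ite, mul_zero]
  rw [Fin.sum_univ_eq_sum_range
      (fun k => if k = j then if (i : ℕ) = k then a i * b k else 0 else 0), sum_ite_eq']
  simp only [mem_range]
  split_ifs <;> simp_all; omega

theorem rank_rectDiag_le [CommSemiring α] [StrongRankCondition α] {r : ℕ} {d : ℕ → α}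
    (hd : ∀ k, r ≤ k → d k = 0) : (rectDiag d : Matrix (Fin m) (Fin n) α).rank ≤ r := by
  have h : (rectDiag d : Matrix (Fin m) (Fin n) α) =
      (rectDiag d : Matrix (Fin m) (Fin r) α) * (rectDiag 1 : Matrix (Fin r) (Fin n) α) := by
    rw [rectDiag_mul_rectDiag]
    congr 1
    ext k
    split_ifs with hk
    · rw [Pi.one_apply, mul_one]
    · exact hd k (not_lt.1 hk)
  exact h ▸ (rank_mul_le_right _ _).trans (rank_le_height _)

end RectDiag

theorem rank_mul_mul_le {R : Type*} [CommSemiring R] [StrongRankCondition R] {l m n o : Type*}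
    [Fintype m] [Fintype n] [Fintype o] (A : Matrix l m R) (B : Matrix m n R) (C : Matrix n o R) :
    (A * B * C).rank ≤ B.rank :=
  (rank_mul_le_left _ _).trans (rank_mul_le_right _ _)

theorem transpose_sub_mul_mul_eq_zero {R : Type*} [CommRing R] {m n k : Type*} [Fintype m]
    {P : Matrix m m R} (hP : Pᵀ = P) (A : Matrix m n R) {X : Matrix m k R} (hX : P * X = X) :
    (A - P * A)ᵀ * X = 0 := by
  rw [transpose_sub, transpose_mul, hP, Matrix.sub_mul, Matrix.mul_assoc, hX, sub_self]

theorem diag_mem_Icc_of_transpose_eq_of_mul_self_eq {m : Type*} [Fintype m]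
    {P : Matrix m m ℝ} (hPT : Pᵀ = P) (hPP : P * P = P) (i : m) : P i i ∈ Set.Icc 0 1 := by
  have h : P i i = ∑ k, P i k ^ 2 := by
    conv_lhs => rw [← hPP]
    refine sum_congr rfl fun k _ => ?_
    have hki : P k i = P i k := congrFun (congrFun hPT i) k
    change P i k * P k i = P i k ^ 2
    rw [hki, sq]
  have hle : P i i ^ 2 ≤ P i i := h ▸ single_le_sum (fun k _ => sq_nonneg (P i k)) (mem_univ i)
  have hnonneg : 0 ≤ P i i := h ▸ sum_nonneg fun k _ => sq_nonneg (P i k)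
  exact ⟨hnonneg, by nlinarith⟩

theorem exists_orthogonalProjection_onto_range {m n : Type*} [Fintype m] [DecidableEq m]
    [Fintype n] [DecidableEq n] (Z : Matrix m n ℝ) :
    ∃ P : Matrix m m ℝ, Pᵀ = P ∧ P * P = P ∧ P.trace = Z.rank ∧ P * Z = Z := by
  let K := LinearMap.range (toEuclideanLin Z)
  let e := toEuclideanCLM (n := m) (𝕜 := ℝ)
  refine ⟨e.symm K.starProjection, ?_, ?_, ?_, ?_⟩
  · have h := e.symm.map_star' K.starProjection
    rw [(isSelfAdjoint_starProjection K).star_eq] at h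
    exact (conjTranspose_eq_transpose_of_trivial _).symm.trans h.symm
  · rw [← map_mul, K.isIdempotentElem_starProjection.eq]
  · have hK := (LinearMap.IsIdempotentElem.isProj_range _
      (ContinuousLinearMap.IsIdempotentElem.toLinearMap K.isIdempotentElem_starProjection)).trace
    rw [LinearMap.trace_eq_matrix_trace ℝ (EuclideanSpace.basisFun m ℝ).toBasis,
      K.range_starProjection] at hK
    rw [rank_eq_finrank_range_toLin Z (EuclideanSpace.basisFun m ℝ).toBasis
      (EuclideanSpace.basisFun n ℝ).toBasis, ← toEuclideanLin_eq_toLin_orthonormal]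
    exact hK
  · refine ext_iff_mulVec.mpr fun v => ?_
    have hv : WithLp.toLp 2 (Z *ᵥ v) ∈ K := ⟨WithLp.toLp 2 v, rfl⟩
    rw [← mulVec_mulVec, ← ofLp_toEuclideanCLM, e.apply_symm_apply,
      K.starProjection_eq_self_iff.mpr hv]

end Matrix

section FrobSq

variable {l m n : ℕ}

theorem frobSq_nonneg (A : Matrix (Fin m) (Fin n) ℝ) : 0 ≤ frobSq A := by
  simp only [frobSq, trace, diag_apply, mul_apply, transpose_apply]
  exact sum_nonneg fun j _ => sum_nonneg fun i _ => mul_self_nonneg (A i j)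

theorem frobSq_mul_mul_of_orthogonal {U : Matrix (Fin m) (Fin m) ℝ}
    {V : Matrix (Fin n) (Fin n) ℝ} (hU : Uᵀ * U = 1) (hV : V * Vᵀ = 1)
    (A : Matrix (Fin m) (Fin n) ℝ) : frobSq (U * A * V) = frobSq A := by
  have h : (U * A * V)ᵀ * (U * A * V) = Vᵀ * (Aᵀ * A * V) := by
    simp only [transpose_mul, Matrix.mul_assoc, ← Matrix.mul_assoc Uᵀ U, hU, Matrix.one_mul]
  rw [frobSq, h, trace_mul_comm, Matrix.mul_assoc, hV, Matrix.mul_one, frobSq]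

theorem frobSq_add_of_transpose_mul_eq_zero {A B : Matrix (Fin m) (Fin n) ℝ}
    (h : Aᵀ * B = 0) : frobSq (A + B) = frobSq A + frobSq B := by
  have h' : Bᵀ * A = 0 := by
    rw [← transpose_transpose (Bᵀ * A), transpose_mul, transpose_transpose, h, transpose_zero]
  simp only [frobSq, transpose_add, Matrix.add_mul, Matrix.mul_add, h, h', trace_add, trace_zero]
  ring

theorem frobSq_sub_frobSq_mul_le {P : Matrix (Fin m) (Fin m) ℝ} (hPT : Pᵀ = P)
    (hPP : P * P = P) {Z : Matrix (Fin m) (Fin n) ℝ} (hPZ : P * Z = Z)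
    (A : Matrix (Fin m) (Fin n) ℝ) :
    frobSq A - frobSq (P * A) ≤ frobSq (A - Z) := by
  have hPPA : P * (P * A) = P * A := by rw [← Matrix.mul_assoc, hPP]
  have hA : frobSq A = frobSq (A - P * A) + frobSq (P * A) := by
    rw [← frobSq_add_of_transpose_mul_eq_zero (transpose_sub_mul_mul_eq_zero hPT A hPPA),
      sub_add_cancel]
  have hAZ : frobSq (A - Z) = frobSq (A - P * A) + frobSq (P * A - Z) := by
    rw [← frobSq_add_of_transpose_mul_eq_zero (transpose_sub_mul_mul_eq_zero hPT A ?_),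
      sub_add_sub_cancel]
    rw [Matrix.mul_sub, hPPA, hPZ]
  linarith [frobSq_nonneg (P * A - Z)]

theorem frobSq_mul_rectDiag (A : Matrix (Fin l) (Fin m) ℝ) (d : ℕ → ℝ) :
    frobSq (A * (rectDiag d : Matrix (Fin m) (Fin n) ℝ)) =
      ∑ i : Fin m, if (i : ℕ) < n then d i ^ 2 * (Aᵀ * A) i i else 0 := by
  set D : Matrix (Fin m) (Fin n) ℝ := rectDiag d
  have h : (A * D)ᵀ * (A * D) = Dᵀ * (Aᵀ * A * D) := by
    simp only [transpose_mul, Matrix.mul_assoc]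
  rw [frobSq, h, trace_mul_comm, Matrix.mul_assoc, transpose_rectDiag, rectDiag_mul_rectDiag,
    rectDiag_self]
  simp only [trace, diag_apply, mul_diagonal]
  refine sum_congr rfl fun i _ => ?_
  split_ifs <;> ring

theorem frobSq_rectDiag (d : ℕ → ℝ) :
    frobSq (rectDiag d : Matrix (Fin m) (Fin n) ℝ) = ∑ k ∈ range (min m n), d k ^ 2 := by
  rw [← Fin.sum_ite_lt_eq_sum_range_min, ← Matrix.one_mul (rectDiag d), frobSq_mul_rectDiag]
  simp

theorem frobSq_rectDiag_sub_truncation {r : ℕ} (hr : r ≤ min m n) (d : ℕ → ℝ) :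
    frobSq (rectDiag d - rectDiag (fun k => if k < r then d k else 0) :
      Matrix (Fin m) (Fin n) ℝ) = ∑ k ∈ Ico r (min m n), d k ^ 2 := by
  rw [rectDiag_sub, frobSq_rectDiag, ← sum_range_add_sum_Ico _ hr,
    sum_eq_zero fun k hk => by simp [mem_range.1 hk], zero_add]
  exact sum_congr rfl fun k hk => by simp [(mem_Ico.1 hk).1.not_gt]

theorem sum_Ico_sq_le_frobSq_rectDiag_sub {r : ℕ} (hr : r ≤ min m n) {σ : ℕ → ℝ}
    (hσ0 : ∀ k, k < min m n → 0 ≤ σ k)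
    (hσdec : ∀ i j : ℕ, i ≤ j → j < min m n → σ j ≤ σ i)
    {Z : Matrix (Fin m) (Fin n) ℝ} (hZ : Z.rank ≤ r) :
    ∑ k ∈ Ico r (min m n), σ k ^ 2 ≤ frobSq (rectDiag σ - Z) := by
  obtain ⟨P, hPT, hPP, htr, hPZ⟩ := Z.exists_orthogonalProjection_onto_range
  have hdiag := diag_mem_Icc_of_transpose_eq_of_mul_self_eq hPT hPP
  let p : ℕ → ℝ := fun k => if h : k < m then P ⟨k, h⟩ ⟨k, h⟩ else 0
  have hp_apply (i : Fin m) : p i = P i i := by simp [p]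
  have hp : ∀ k < min m n, p k ∈ Set.Icc 0 1 := fun k hk => by
    simpa [p, (lt_min_iff.1 hk).1] using hdiag ⟨k, (lt_min_iff.1 hk).1⟩
  have hps : ∑ k ∈ range (min m n), p k ≤ r := by
    rw [← Fin.sum_ite_lt_eq_sum_range_min]
    calc ∑ i : Fin m, (if (i : ℕ) < n then p i else 0)
        ≤ ∑ i : Fin m, P i i := sum_le_sum fun i _ => by
          split_ifs
          · exact (hp_apply i).le
          · exact (hdiag i).1
      _ = Z.rank := htr
      _ ≤ r := by exact_mod_cast hZ
  have hPD : frobSq (P * (rectDiag σ : Matrix (Fin m) (Fin n) ℝ)) =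
      ∑ k ∈ range (min m n), σ k ^ 2 * p k := by
    rw [frobSq_mul_rectDiag, hPT, hPP, ← Fin.sum_ite_lt_eq_sum_range_min]
    simp only [hp_apply]
  have hmaj : ∑ k ∈ range (min m n), σ k ^ 2 * p k ≤ ∑ k ∈ range r, σ k ^ 2 :=
    sum_range_mul_le_sum_range hr (fun k _ => sq_nonneg (σ k))
      (fun i j hij hj => pow_le_pow_left₀ (hσ0 j hj) (hσdec i j hij hj) 2) hp hps
  calc ∑ k ∈ Ico r (min m n), σ k ^ 2
      = ∑ k ∈ range (min m n), σ k ^ 2 - ∑ k ∈ range r, σ k ^ 2 := by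
        rw [← sum_range_add_sum_Ico _ hr, add_sub_cancel_left]
    _ ≤ frobSq (rectDiag σ : Matrix (Fin m) (Fin n) ℝ) -
          frobSq (P * (rectDiag σ : Matrix (Fin m) (Fin n) ℝ)) := by
        rw [frobSq_rectDiag, hPD]
        linarith
    _ ≤ frobSq (rectDiag σ - Z) := frobSq_sub_frobSq_mul_le hPT hPP hPZ _

end FrobSq

/-- Eckart–Young–Mirsky (Frobenius norm): if M = UΣVᵀ is an SVD with ordered
nonnegative singular values σ₁ ≥ σ₂ ≥ …, then among all matrices of rank at
most r, the truncation M_r minimizes the Frobenius distance to M, and the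
minimal squared distance equals ∑_{i=r+1}^{min(m,n)} σ_i². -/
theorem stmt18 {m n r : ℕ} (hr : r ≤ min m n)
    (M : Matrix (Fin m) (Fin n) ℝ)
    (U : Matrix (Fin m) (Fin m) ℝ) (V : Matrix (Fin n) (Fin n) ℝ)
    (σ : ℕ → ℝ)
    (hU : Uᵀ * U = 1) (hV : Vᵀ * V = 1)
    (hσ0 : ∀ k, k < min m n → 0 ≤ σ k)
    (hσdec : ∀ i j : ℕ, i ≤ j → j < min m n → σ j ≤ σ i)
    (hM : M = U * (Matrix.of fun (i : Fin m) (j : Fin n) =>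
        if (i : ℕ) = (j : ℕ) then σ (i : ℕ) else 0) * Vᵀ) :
    letI Mr : Matrix (Fin m) (Fin n) ℝ :=
      U * (Matrix.of fun (i : Fin m) (j : Fin n) =>
        if (i : ℕ) = (j : ℕ) ∧ (i : ℕ) < r then σ (i : ℕ) else 0) * Vᵀ
    Mr.rank ≤ r ∧
      (∀ Z : Matrix (Fin m) (Fin n) ℝ, Z.rank ≤ r →
        frobSq (M - Mr) ≤ frobSq (M - Z)) ∧
      frobSq (M - Mr) = ∑ k ∈ Finset.Ico r (min m n), (σ k) ^ 2 := by
  replace hM : M = U * (rectDiag σ : Matrix (Fin m) (Fin n) ℝ) * Vᵀ := hM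
  set Dr : Matrix (Fin m) (Fin n) ℝ := rectDiag fun k => if k < r then σ k else 0
  have hDr : (of fun (i : Fin m) (j : Fin n) =>
      if (i : ℕ) = (j : ℕ) ∧ (i : ℕ) < r then σ (i : ℕ) else 0) = Dr := by
    ext i j
    simp [Dr, rectDiag, ite_and]
  have hdist (X : Matrix (Fin m) (Fin n) ℝ) :
      frobSq (M - U * X * Vᵀ) = frobSq (rectDiag σ - X) := by
    rw [hM, ← Matrix.sub_mul, ← Matrix.mul_sub,
      frobSq_mul_mul_of_orthogonal hU (by rwa [transpose_transpose])]
  have hval : frobSq (M - U * Dr * Vᵀ) = ∑ k ∈ Ico r (min m n), σ k ^ 2 := by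
    rw [hdist, frobSq_rectDiag_sub_truncation hr]
  rw [hDr]
  refine ⟨(rank_mul_mul_le _ _ _).trans (rank_rectDiag_le fun k hk => if_neg hk.not_gt),
    fun Z hZ => ?_, hval⟩
  have hUZV : U * (Uᵀ * Z * V) * Vᵀ = Z := by
    simp only [Matrix.mul_assoc, mul_eq_one_comm.mp hV, Matrix.mul_one, ← Matrix.mul_assoc U,
      mul_eq_one_comm.mp hU, Matrix.one_mul]
  rw [hval, ← hUZV, hdist]
  exact sum_Ico_sq_le_frobSq_rectDiag_sub hr hσ0 hσdec ((rank_mul_mul_le _ _ _).trans hZ)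
end
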